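/- Let $M$ be the square matrix indexed by even pairs $(a_1,a_2)$ in $(\mathbb{Z}/2\mathbb{Z})^g \times (\mathbb{Z}/2\mathbb{Z})^g$ (pairs with $a_1\cdot a_2=0$) with entries $(-1)^{a_1\cdot b_2 + a_2\cdot b_1} \in \mathbb{Q}$. Then $M$ is invertible, with inverse $M^{-1} = \frac{1}{2^{2g-1}}(M - 2^{g-1} I)$. -/

import Mathlib

open Finset

def dot {g : ℕ} (a b : Fin g → ZMod 2) : ZMod 2 := ∑ i, a i * b i

def sgn (x : ZMod 2) : ℚ := (-1 : ℚ) ^ x.val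

/-- The type of even pairs in `(ℤ/2ℤ)^g × (ℤ/2ℤ)^g`. -/
def EvenPair (g : ℕ) : Type :=
  { p : (Fin g → ZMod 2) × (Fin g → ZMod 2) // dot p.1 p.2 = 0 }

instance (g : ℕ) : Fintype (EvenPair g) := by unfold EvenPair; infer_instance
instance (g : ℕ) : DecidableEq (EvenPair g) := by unfold EvenPair; infer_instance

/-- The matrix with entries `(-1)^(a₁·b₂ + a₂·b₁)` indexed by even pairs. -/
def M (g : ℕ) : Matrix (EvenPair g) (EvenPair g) ℚ :=
  fun a b => sgn (dot a.1.1 b.1.2 + dot a.1.2 b.1.1)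

/-!
Each entry of `M * M` is a character sum over the even pairs. Writing the indicator of evenness
as `(1 + (-1)^(c₁·c₂)) / 2` splits it into a full character sum over `(ℤ/2ℤ)^(2g)`, which gives
`4^g δ_ab`, and a Gauss sum of the quadratic form `c₁·c₂`, which gives `2^g M_ab`. Hence
`M² = 2^(g-1) M + 2^(2g-1) I`, and the claimed inverse follows.
-/

lemma zmod_two_cases (x : ZMod 2) : x = 0 ∨ x = 1 := by
  revert x; decide

lemma sum_zmod_two {A : Type*} [AddCommMonoid A] (f : ZMod 2 → A) : ∑ t, f t = f 0 + f 1 :=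
  Fintype.sum_eq_add 0 1 (by decide) fun x hx => ((zmod_two_cases x).elim hx.1 hx.2).elim

@[simp] lemma sgn_zero : sgn 0 = 1 := by simp [sgn]

@[simp] lemma sgn_one : sgn 1 = -1 := by simp [sgn, ZMod.val_one]

lemma sgn_add (x y : ZMod 2) : sgn (x + y) = sgn x * sgn y := by
  rcases zmod_two_cases x with rfl | rfl <;> rcases zmod_two_cases y with rfl | rfl <;>
    simp only [add_zero, zero_add, CharTwo.add_self_eq_zero, sgn_zero, sgn_one] <;> norm_num

lemma one_add_sgn (x : ZMod 2) : 1 + sgn x = if x = 0 then 2 else 0 := by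
  rcases zmod_two_cases x with rfl | rfl <;> norm_num

lemma sgn_sum {ι : Type*} (s : Finset ι) (f : ι → ZMod 2) :
    sgn (∑ i ∈ s, f i) = ∏ i ∈ s, sgn (f i) := by
  classical
  induction s using Finset.induction_on with
  | empty => simp
  | insert i s hi ih => rw [sum_insert hi, prod_insert hi, sgn_add, ih]

lemma sum_subtype_eq_zero {α : Type*} [Fintype α] (q : α → ZMod 2) (f : α → ℚ) :
    ∑ x : {x // q x = 0}, f x = (1 / 2) * ∑ x, (1 + sgn (q x)) * f x := by
  classical
  simp only [one_add_sgn, ite_mul, zero_mul, ← sum_filter, ← mul_sum]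
  rw [sum_subtype (p := fun x => q x = 0) _ (fun x => by simp)]
  ring

section

variable {g : ℕ}

lemma dot_comm (a b : Fin g → ZMod 2) : dot a b = dot b a :=
  dotProduct_comm a b

lemma dot_add_right (a b c : Fin g → ZMod 2) : dot a (b + c) = dot a b + dot a c :=
  dotProduct_add a b c

lemma dot_add_left (a b c : Fin g → ZMod 2) : dot (a + b) c = dot a c + dot b c :=
  add_dotProduct a b c

lemma sum_sgn_dot (u : Fin g → ZMod 2) :
    ∑ x, sgn (dot x u) = if u = 0 then 2 ^ g else 0 := by
  calc ∑ x, sgn (dot x u) = ∑ x : Fin g → ZMod 2, ∏ i, sgn (x i * u i) := by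
        simp only [dot, sgn_sum]
    _ = ∏ i, ∑ t : ZMod 2, sgn (t * u i) := by rw [Fintype.prod_sum]
    _ = ∏ i, if u i = 0 then (2 : ℚ) else 0 := by
        refine prod_congr rfl fun i _ => ?_
        simp [← one_add_sgn, sum_zmod_two]
    _ = if u = 0 then 2 ^ g else 0 := by
        simp [prod_ite_zero, funext_iff]

lemma add_eq_zero_iff_eq_of_zmod_two {V : Type*} [AddCommGroup V] [Module (ZMod 2) V] {x y : V} :
    x + y = 0 ↔ x = y := by
  rw [add_eq_zero_iff_eq_neg, ZModModule.neg_eq_self]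

def symp (p q : (Fin g → ZMod 2) × (Fin g → ZMod 2)) : ZMod 2 := dot p.1 q.2 + dot p.2 q.1

lemma symp_comm (p q : (Fin g → ZMod 2) × (Fin g → ZMod 2)) : symp p q = symp q p := by
  rw [symp, symp, dot_comm p.1, dot_comm p.2, add_comm]

lemma symp_add_right (p q r : (Fin g → ZMod 2) × (Fin g → ZMod 2)) :
    symp p (q + r) = symp p q + symp p r := by
  simp only [symp, Prod.fst_add, Prod.snd_add, dot_add_right]
  ring

lemma dot_fst_snd_add (p q : (Fin g → ZMod 2) × (Fin g → ZMod 2)) :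
    dot (p + q).1 (p + q).2 = dot p.1 p.2 + dot q.1 q.2 + symp p q := by
  simp only [symp, Prod.fst_add, Prod.snd_add, dot_add_left, dot_add_right, dot_comm q.1 p.2]
  ring

lemma sum_sgn_symp (d : (Fin g → ZMod 2) × (Fin g → ZMod 2)) :
    ∑ c, sgn (symp c d) = if d = 0 then 2 ^ g * 2 ^ g else 0 := by
  simp only [symp, sgn_add, Fintype.sum_prod_type, ← sum_mul_sum, sum_sgn_dot,
    ite_zero_mul_ite_zero, Prod.ext_iff, Prod.fst_zero, Prod.snd_zero, and_comm]

-- Summing over `c₂` first forces `c₁ = d₁`.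
lemma sum_sgn_dot_add_symp (d : (Fin g → ZMod 2) × (Fin g → ZMod 2)) :
    ∑ c : (Fin g → ZMod 2) × (Fin g → ZMod 2), sgn (dot c.1 c.2 + symp c d) =
      2 ^ g * sgn (dot d.1 d.2) := by
  have hsplit : ∀ x y : Fin g → ZMod 2,
      sgn (dot x y + symp (x, y) d) = sgn (dot x d.2) * sgn (dot y (x + d.1)) := by
    intro x y
    rw [symp, dot_add_right, dot_comm y x, ← sgn_add]
    congr 1
    ring
  simp only [Fintype.sum_prod_type, hsplit, ← mul_sum, sum_sgn_dot,
    add_eq_zero_iff_eq_of_zmod_two, mul_ite, mul_zero, sum_ite_eq', mem_univ, if_true]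
  rw [dot_comm, mul_comm]

lemma two_mul_sum_evenPair_sgn_symp (d : (Fin g → ZMod 2) × (Fin g → ZMod 2)) :
    2 * ∑ c : EvenPair g, sgn (symp c.1 d) =
      (if d = 0 then 2 ^ g * 2 ^ g else 0) + 2 ^ g * sgn (dot d.1 d.2) := by
  have hsum := sum_subtype_eq_zero (fun c : (Fin g → ZMod 2) × (Fin g → ZMod 2) => dot c.1 c.2)
    (fun c => sgn (symp c d))
  simp only [add_mul, one_mul, ← sgn_add, sum_add_distrib, sum_sgn_symp,
    sum_sgn_dot_add_symp] at hsum
  rw [show ∑ c : EvenPair g, sgn (symp c.1 d) = _ from hsum]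
  ring

lemma M_apply (a b : EvenPair g) : M g a b = sgn (symp a.1 b.1) := rfl

lemma two_mul_M_mul_M_apply (a b : EvenPair g) :
    2 * (M g * M g) a b = (if a = b then 2 ^ g * 2 ^ g else 0) + 2 ^ g * M g a b := by
  have hentry : ∀ c : EvenPair g, M g a c * M g c b = sgn (symp c.1 (a.1 + b.1)) := by
    intro c
    rw [M_apply, M_apply, ← sgn_add, symp_comm a.1, symp_add_right]
  have hdiag : a.1 + b.1 = 0 ↔ a = b := by
    rw [add_eq_zero_iff_eq_of_zmod_two]
    exact ⟨Subtype.ext, congrArg Subtype.val⟩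
  have heven : dot (a.1 + b.1).1 (a.1 + b.1).2 = symp a.1 b.1 := by
    rw [dot_fst_snd_add, a.2, b.2, zero_add, zero_add]
  rw [Matrix.mul_apply, sum_congr rfl fun c _ => hentry c, two_mul_sum_evenPair_sgn_symp]
  simp only [hdiag, heven, M_apply]

lemma M_mul_M (hg : 1 ≤ g) :
    M g * M g = (2 : ℚ) ^ (g - 1) • M g + (2 : ℚ) ^ (2 * g - 1) • 1 := by
  obtain ⟨k, rfl⟩ := Nat.exists_eq_add_of_le' hg
  ext a b
  have h := two_mul_M_mul_M_apply a b
  rw [show 2 * (k + 1) - 1 = 2 * k + 1 by omega, Nat.add_sub_cancel]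
  simp only [Matrix.add_apply, Matrix.smul_apply, Matrix.one_apply, smul_eq_mul] at h ⊢
  split_ifs at h ⊢ <;> linear_combination h / 2

end

theorem stmt_4 (g : ℕ) (hg : 1 ≤ g) :
    IsUnit (M g) ∧
    (M g)⁻¹ = ((1 : ℚ) / 2 ^ (2 * g - 1)) • (M g - ((2 : ℚ) ^ (g - 1)) • 1) := by
  have hright : M g * (((1 : ℚ) / 2 ^ (2 * g - 1)) • (M g - ((2 : ℚ) ^ (g - 1)) • 1)) = 1 := by
    rw [Matrix.mul_smul, Matrix.mul_sub, Matrix.mul_smul, Matrix.mul_one, M_mul_M hg,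
      add_sub_cancel_left, smul_smul, one_div, inv_mul_cancel₀ (by positivity), one_smul]
  exact ⟨(M g).isUnit_iff_isUnit_det.mpr (Matrix.isUnit_det_of_right_inverse hright),
    Matrix.inv_eq_right_inv hright⟩
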